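/- arXiv:2201.01566 — 2 statements merged into one kernel-verified Lean document; each statement's English description precedes it below -/
import Mathlib

section
/- Let N, n, a be natural numbers with a ≤ n ≤ N and let p be a real number with 0 ≤ p < 1. Writing B(k) := C(N,k) p^k (1−p)^{N−k} for the binomial probability mass function, one has the inequality B(n) · C(n,a) ≤ ((N·p/(1−p))^a / a!) · B(n−a). In particular, if p = λh^d and N = (ρ/h)^d (so that Np = λρ^d) with λ h^d ≤ 1/2, then B(n) · C(n,a) · ρ^{−da} ≤ ((2λ)^a / a!) · B(n−a). -/
/-- The binomial probability mass function `B(k) := C(N,k) p^k (1−p)^{N−k}`. -/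
noncomputable def binomialPMF (N : ℕ) (p : ℝ) (k : ℕ) : ℝ :=
  (Nat.choose N k : ℝ) * p ^ k * (1 - p) ^ (N - k)

/-!
The identity `C(N,n) C(n,a) = C(N,a) C(N-a,n-a)` with `C(N,a) ≤ N^a/a!` and
`C(N-a,n-a) ≤ C(N,n-a)` bounds the combinatorial factor, and moving from `k = n` to `k = n - a`
trades `p^a` for `(1-p)^a`, i.e. costs the odds `(p/(1-p))^a`. For the special case, `N p = λ ρ^d` and
`p ≤ 1/2` gives `N p/(1-p) ≤ 2 λ ρ^d`.
-/

theorem Nat.cast_choose_mul_choose_le {N n a : ℕ} (han : a ≤ n) :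
    (N.choose n * n.choose a : ℝ) ≤ (N : ℝ) ^ a / a.factorial * N.choose (n - a) := by
  calc (N.choose n * n.choose a : ℝ) = N.choose a * (N - a).choose (n - a) := by
        exact_mod_cast Nat.choose_mul han
    _ ≤ (N : ℝ) ^ a / a.factorial * N.choose (n - a) := by
        gcongr
        · exact Nat.choose_le_pow_div a N
        · exact Nat.sub_le N a

theorem binomialPMF_eq_mul_odds_pow {N n a : ℕ} (han : a ≤ n) (hnN : n ≤ N) {p : ℝ}
    (hp1 : p ≠ 1) :
    binomialPMF N p n =
      N.choose n * (p / (1 - p)) ^ a * (p ^ (n - a) * (1 - p) ^ (N - (n - a))) := by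
  obtain ⟨m, rfl⟩ := Nat.exists_eq_add_of_le' han
  have hq : 1 - p ≠ 0 := sub_ne_zero.mpr hp1.symm
  rw [binomialPMF, Nat.add_sub_cancel, show N - m = N - (m + a) + a by omega, pow_add, pow_add,
    div_pow]
  field_simp

theorem binomialPMF_mul_choose_le_pow_div_mul {N n a : ℕ} (han : a ≤ n) (hnN : n ≤ N) {p : ℝ}
    (hp0 : 0 ≤ p) (hp1 : p < 1) :
    binomialPMF N p n * n.choose a
      ≤ ((N : ℝ) * p / (1 - p)) ^ a / a.factorial * binomialPMF N p (n - a) := by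
  have hq : 0 < 1 - p := sub_pos.mpr hp1
  set w := p ^ (n - a) * (1 - p) ^ (N - (n - a))
  have hw : 0 ≤ w := by positivity
  calc binomialPMF N p n * n.choose a
      = (N.choose n * n.choose a : ℝ) * ((p / (1 - p)) ^ a * w) := by
        rw [binomialPMF_eq_mul_odds_pow han hnN hp1.ne]; ring
    _ ≤ (N : ℝ) ^ a / a.factorial * N.choose (n - a) * ((p / (1 - p)) ^ a * w) := by
        gcongr ?_ * _
        exact Nat.cast_choose_mul_choose_le han
    _ = ((N : ℝ) * p / (1 - p)) ^ a / a.factorial * binomialPMF N p (n - a) := by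
        rw [binomialPMF]; ring

theorem binomialPMF_nonneg (N k : ℕ) {p : ℝ} (hp0 : 0 ≤ p) (hp1 : p ≤ 1) :
    0 ≤ binomialPMF N p k := by
  have : 0 ≤ 1 - p := sub_nonneg.mpr hp1
  unfold binomialPMF
  positivity

/-- For `a ≤ n ≤ N` and `0 ≤ p < 1`, the inequality
`B(n) · C(n,a) ≤ ((N·p/(1−p))^a / a!) · B(n−a)`; in particular, if `p = λh^d` and
`N = (ρ/h)^d` (so that `Np = λρ^d`) with `λh^d ≤ 1/2`, then
`B(n) · C(n,a) · ρ^{−da} ≤ ((2λ)^a / a!) · B(n−a)`. -/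
theorem binomialPMF_mul_choose_le
    (N n a : ℕ) (han : a ≤ n) (hnN : n ≤ N) (p : ℝ) (hp0 : 0 ≤ p) (hp1 : p < 1) :
    binomialPMF N p n * (Nat.choose n a : ℝ)
        ≤ ((N : ℝ) * p / (1 - p)) ^ a / (Nat.factorial a : ℝ) * binomialPMF N p (n - a)
    ∧ ∀ (lam h ρ : ℝ) (d : ℕ), 0 ≤ lam → 0 < h → 0 < ρ →
        p = lam * h ^ d → (N : ℝ) = (ρ / h) ^ d → lam * h ^ d ≤ 1 / 2 →
        binomialPMF N p n * (Nat.choose n a : ℝ) * ρ ^ (-(d * a : ℤ))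
          ≤ (2 * lam) ^ a / (Nat.factorial a : ℝ) * binomialPMF N p (n - a) := by
  refine ⟨binomialPMF_mul_choose_le_pow_div_mul han hnN hp0 hp1, ?_⟩
  intro lam h ρ d hlam hh hρ hpval hNval hhalf
  have hNp : (N : ℝ) * p = lam * ρ ^ d := by
    rw [hpval, hNval, div_pow]
    field_simp
  have hodds : (N : ℝ) * p / (1 - p) ≤ 2 * lam * ρ ^ d := by
    rw [div_le_iff₀ (by linarith), hNp]
    nlinarith [mul_nonneg hlam (pow_nonneg hρ.le d)]
  have hB_nonneg := binomialPMF_nonneg N (n - a) hp0 hp1.le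
  calc binomialPMF N p n * n.choose a * ρ ^ (-(d * a : ℤ))
      ≤ ((N : ℝ) * p / (1 - p)) ^ a / a.factorial * binomialPMF N p (n - a)
          * ρ ^ (-(d * a : ℤ)) := by
        gcongr ?_ * _
        exact binomialPMF_mul_choose_le_pow_div_mul han hnN hp0 hp1
    _ ≤ (2 * lam * ρ ^ d) ^ a / a.factorial * binomialPMF N p (n - a) * ρ ^ (-(d * a : ℤ)) := by
        gcongr
    _ = (2 * lam) ^ a / a.factorial * binomialPMF N p (n - a) := by
        rw [mul_pow, ← pow_mul, zpow_neg, ← Nat.cast_mul, zpow_natCast]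
        field_simp
end

section
/- Let C ≥ 0. Suppose (f_n) is a sequence of functions [0,1] → ℝ converging pointwise on [0,1] to a function f, and suppose there are real coefficients a_{n,j} (n, j ∈ ℕ) such that |a_{n,j}| ≤ (j!)^2 C^j for all n, j, and such that the uniform Taylor remainder bounds |f_n(p) − ∑_{j=0}^{k} (p^j / j!) a_{n,j}| ≤ (k+1)! (Cp)^{k+1} hold for all n, all k ∈ ℕ, and all p ∈ [0,1]. Then for every j ∈ ℕ the limit a_j := lim_{n→∞} a_{n,j} exists in ℝ, satisfies |a_j| ≤ (j!)^2 C^j, and the limit function satisfies |f(p) − ∑_{j=0}^{k} (p^j / j!) a_j| ≤ (k+1)! (Cp)^{k+1} for all k ∈ ℕ and p ∈ [0,1]. -/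
/-!
The order-`j` remainder bound isolates the `j`-th coefficient: for `0 < p ≤ 1`,
`a_{n,j} = (j! / p^j) (f_n(p) - ∑_{i<j} (p^i / i!) a_{n,i}) + O(p)` uniformly in `n`.
By strong induction on `j` the main term converges as `n → ∞` for each fixed `p`,
so letting `p → 0⁺` shows that `(a_{n,j})_n` is Cauchy. The coefficient and remainder
bounds are closed conditions and pass to the limit.
-/

open Filter Finset Set Topology

theorem CauchySeq.of_forall_exists_dist_le {α ι : Type*} [PseudoMetricSpace α]
    [SemilatticeSup ι] [Nonempty ι] {u : ι → α}
    (h : ∀ ε > 0, ∃ v : ι → α, CauchySeq v ∧ ∀ n, dist (u n) (v n) ≤ ε) :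
    CauchySeq u := by
  refine Metric.cauchySeq_iff'.2 fun ε hε => ?_
  obtain ⟨v, hv, huv⟩ := h (ε / 4) (by positivity)
  obtain ⟨N, hN⟩ := Metric.cauchySeq_iff'.1 hv (ε / 4) (by positivity)
  refine ⟨N, fun n hn => ?_⟩
  have hvN := huv N
  rw [dist_comm] at hvN
  calc dist (u n) (u N) ≤ dist (u n) (v n) + dist (v n) (v N) + dist (v N) (u N) :=
        dist_triangle4 _ _ _ _
    _ < ε := by linarith [huv n, hN n hn]

noncomputable def taylorSum (b : ℕ → ℝ) (p : ℝ) (k : ℕ) : ℝ :=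
  ∑ j ∈ range k, p ^ j / (Nat.factorial j : ℝ) * b j

theorem taylorSum_succ (b : ℕ → ℝ) (p : ℝ) (k : ℕ) :
    taylorSum b p (k + 1) = taylorSum b p k + p ^ k / (Nat.factorial k : ℝ) * b k :=
  sum_range_succ _ k

theorem abs_coeff_sub_le_of_abs_sub_taylorSum_le {b : ℕ → ℝ} {y p C : ℝ} {j : ℕ}
    (hp : 0 < p)
    (h : |y - taylorSum b p (j + 1)| ≤ (Nat.factorial (j + 1) : ℝ) * (C * p) ^ (j + 1)) :
    |b j - (Nat.factorial j : ℝ) / p ^ j * (y - taylorSum b p j)|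
      ≤ (Nat.factorial j : ℝ) * (Nat.factorial (j + 1) : ℝ) * C ^ (j + 1) * p := by
  have hc : 0 < (Nat.factorial j : ℝ) / p ^ j := by positivity
  have heq : b j - (Nat.factorial j : ℝ) / p ^ j * (y - taylorSum b p j)
      = -((Nat.factorial j : ℝ) / p ^ j * (y - taylorSum b p (j + 1))) := by
    rw [taylorSum_succ]
    field_simp
    ring
  calc |b j - (Nat.factorial j : ℝ) / p ^ j * (y - taylorSum b p j)|
      = (Nat.factorial j : ℝ) / p ^ j * |y - taylorSum b p (j + 1)| := by
        rw [heq, abs_neg, abs_mul, abs_of_pos hc]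
    _ ≤ (Nat.factorial j : ℝ) / p ^ j *
          ((Nat.factorial (j + 1) : ℝ) * (C * p) ^ (j + 1)) := by gcongr
    _ = (Nat.factorial j : ℝ) * (Nat.factorial (j + 1) : ℝ) * C ^ (j + 1) * p := by
        field_simp
        ring

theorem exists_tendsto_coeff_of_taylor_remainder_le
    (C : ℝ) (f : ℕ → ℝ → ℝ) (g : ℝ → ℝ) (a : ℕ → ℕ → ℝ)
    (hlim : ∀ p ∈ Icc (0 : ℝ) 1, Tendsto (fun n => f n p) atTop (𝓝 (g p)))
    (hrem : ∀ n k, ∀ p ∈ Icc (0 : ℝ) 1,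
      |f n p - taylorSum (a n) p (k + 1)| ≤ (Nat.factorial (k + 1) : ℝ) * (C * p) ^ (k + 1))
    (j : ℕ) : ∃ L, Tendsto (fun n => a n j) atTop (𝓝 L) := by
  induction j using Nat.strong_induction_on with
  | _ j ih =>
  refine cauchySeq_tendsto_of_complete (CauchySeq.of_forall_exists_dist_le fun ε hε => ?_)
  set D := (Nat.factorial j : ℝ) * (Nat.factorial (j + 1) : ℝ) * C ^ (j + 1)
  have hDp : Tendsto (fun p => D * p) (𝓝[>] 0) (𝓝 0) :=
    ((continuous_const_mul D).tendsto' 0 0 (mul_zero D)).mono_left nhdsWithin_le_nhds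
  obtain ⟨p, ⟨hp0, hp1⟩, hpε⟩ : ∃ p ∈ Ioc (0 : ℝ) 1, D * p ≤ ε :=
    (Eventually.and (Ioc_mem_nhdsGT one_pos) (hDp.eventually (ge_mem_nhds hε))).exists
  have hp : p ∈ Icc (0 : ℝ) 1 := ⟨hp0.le, hp1⟩
  have hlower : Tendsto (fun n => taylorSum (a n) p j) atTop
      (𝓝 (taylorSum (fun i => limUnder atTop (a · i)) p j)) :=
    tendsto_finsetSum _ fun i hi =>
      (tendsto_nhds_limUnder (ih i (mem_range.1 hi))).const_mul _
  refine ⟨fun n => (Nat.factorial j : ℝ) / p ^ j * (f n p - taylorSum (a n) p j),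
    (((hlim p hp).sub hlower).const_mul _).cauchySeq, fun n => ?_⟩
  rw [Real.dist_eq]
  exact (abs_coeff_sub_le_of_abs_sub_taylorSum_le hp0 (hrem n j p hp)).trans hpε

theorem taylor_coefficients_pass_to_limit_general
    (C : ℝ)
    (f : ℕ → ℝ → ℝ) (g : ℝ → ℝ)
    (a : ℕ → ℕ → ℝ)
    (hlim : ∀ p ∈ Icc (0 : ℝ) 1, Tendsto (fun n => f n p) atTop (nhds (g p)))
    (hcoef : ∀ n j, |a n j| ≤ (Nat.factorial j : ℝ) ^ 2 * C ^ j)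
    (hrem : ∀ n (k : ℕ), ∀ p ∈ Icc (0 : ℝ) 1,
      |f n p - ∑ j ∈ range (k + 1), p ^ j / (Nat.factorial j : ℝ) * a n j|
        ≤ (Nat.factorial (k + 1) : ℝ) * (C * p) ^ (k + 1)) :
    ∃ A : ℕ → ℝ,
      (∀ j, Tendsto (fun n => a n j) atTop (nhds (A j)))
      ∧ (∀ j, |A j| ≤ (Nat.factorial j : ℝ) ^ 2 * C ^ j)
      ∧ ∀ (k : ℕ), ∀ p ∈ Icc (0 : ℝ) 1,
          |g p - ∑ j ∈ range (k + 1), p ^ j / (Nat.factorial j : ℝ) * A j|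
            ≤ (Nat.factorial (k + 1) : ℝ) * (C * p) ^ (k + 1) := by
  choose A hA using exists_tendsto_coeff_of_taylor_remainder_le C f g a hlim hrem
  refine ⟨A, hA, fun j => ?_, fun k p hp => ?_⟩
  · exact le_of_tendsto (hA j).abs (.of_forall fun n => hcoef n j)
  · have hsum := tendsto_finsetSum (range (k + 1)) fun i _ =>
      (hA i).const_mul (p ^ i / (Nat.factorial i : ℝ))
    exact le_of_tendsto ((hlim p hp).sub hsum).abs (.of_forall fun n => hrem n k p hp)

/-- Passage to the limit in the approximation parameters: if `f_n → f` pointwise on `[0,1]`,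
the coefficients `a_{n,j}` satisfy `|a_{n,j}| ≤ (j!)^2 C^j`, and the uniform Taylor remainder
bounds `|f_n(p) − ∑_{j≤k} (p^j/j!) a_{n,j}| ≤ (k+1)! (Cp)^{k+1}` hold, then the limits
`a_j = lim_n a_{n,j}` exist, satisfy the same bounds, and the limit function satisfies the
same Taylor remainder bounds. -/
theorem taylor_coefficients_pass_to_limit
    (C : ℝ) (hC : 0 ≤ C)
    (f : ℕ → ℝ → ℝ) (g : ℝ → ℝ)
    (a : ℕ → ℕ → ℝ)
    (hlim : ∀ p ∈ Icc (0 : ℝ) 1, Tendsto (fun n => f n p) atTop (nhds (g p)))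
    (hcoef : ∀ n j, |a n j| ≤ (Nat.factorial j : ℝ) ^ 2 * C ^ j)
    (hrem : ∀ n (k : ℕ), ∀ p ∈ Icc (0 : ℝ) 1,
      |f n p - ∑ j ∈ range (k + 1), p ^ j / (Nat.factorial j : ℝ) * a n j|
        ≤ (Nat.factorial (k + 1) : ℝ) * (C * p) ^ (k + 1)) :
    ∃ A : ℕ → ℝ,
      (∀ j, Tendsto (fun n => a n j) atTop (nhds (A j)))
      ∧ (∀ j, |A j| ≤ (Nat.factorial j : ℝ) ^ 2 * C ^ j)
      ∧ ∀ (k : ℕ), ∀ p ∈ Icc (0 : ℝ) 1,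
          |g p - ∑ j ∈ range (k + 1), p ^ j / (Nat.factorial j : ℝ) * A j|
            ≤ (Nat.factorial (k + 1) : ℝ) * (C * p) ^ (k + 1) :=
  taylor_coefficients_pass_to_limit_general C f g a hlim hcoef hrem
end
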